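/- arXiv:2308.02261 — 3 statements merged into one kernel-verified Lean document; each statement's English description precedes it below -/
import Mathlib

section
/- Consider adaptive gradient descent where stepsizes satisfy α_k ‖∇f(x^k) - ∇f(x^{k-1})‖ ≤ γ ‖x^k - x^{k-1}‖ for γ ∈ (0,1), with x^{k+1} = x^k - α_k ∇f(x^k). Then ‖x^{k+1} - x^k‖² ≤ γ² ‖x^k - x^{k-1}‖² + α_k θ_k (f(x^{k-1}) - f(x^k)), where θ_k = α_k/α_{k-1}. -/
open scoped RealInnerProductSpace

/-!
With `a = ∇f(x^k)` and `b = ∇f(x^{k-1})` we have `x^{k+1} - x^k = -α_k a`,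
`x^k - x^{k-1} = -α_{k-1} b` and `‖a‖² = ‖a - b‖² + ⟪a - b, b⟫ + ⟪a, b⟫`.
The stepsize condition bounds `α_k² ‖a - b‖²` by `γ² ‖x^k - x^{k-1}‖²`, monotonicity of the
gradient of a convex function makes `⟪a - b, b⟫ ≤ 0`, and the first-order convexity inequality
at `x^k` gives `α_{k-1} ⟪a, b⟫ = ⟪a, x^{k-1} - x^k⟫ ≤ f(x^{k-1}) - f(x^k)`.
-/

section FirstOrder

variable {E : Type*} [NormedAddCommGroup E] [NormedSpace ℝ E] {s : Set E} {f : E → ℝ} {x y : E}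

theorem ConvexOn.add_fderiv_sub_le {f' : E →L[ℝ] ℝ} (hf : ConvexOn ℝ s f) (hx : x ∈ s)
    (hy : y ∈ s) (hf' : HasFDerivAt f f' x) : f x + f' (y - x) ≤ f y := by
  let ℓ : ℝ →ᵃ[ℝ] E := AffineMap.lineMap x y
  have hℓ₀ : ℓ 0 = x := AffineMap.lineMap_apply_zero x y
  have hℓ₁ : ℓ 1 = y := AffineMap.lineMap_apply_one x y
  have hderiv : HasDerivAt (f ∘ ℓ) (f' (y - x)) 0 := by
    rw [← hℓ₀] at hf'
    exact hf'.comp_hasDerivAt 0 AffineMap.hasDerivAt_lineMap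
  have hslope := (hf.comp_affineMap ℓ).le_slope_of_hasDerivAt (by simpa [hℓ₀] using hx)
    (by simpa [hℓ₁] using hy) zero_lt_one hderiv
  rw [slope_def_field, Function.comp_apply, Function.comp_apply, hℓ₀, hℓ₁, sub_zero,
    div_one] at hslope
  linarith

end FirstOrder

section Gradient

variable {F : Type*} [NormedAddCommGroup F] [InnerProductSpace ℝ F] [CompleteSpace F]
  {f : F → ℝ} {x y g gx gy : F}

theorem ConvexOn.add_inner_gradient_sub_le (hf : ConvexOn ℝ Set.univ f)
    (hg : HasGradientAt f g x) : f x + ⟪g, y - x⟫ ≤ f y := by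
  simpa using hf.add_fderiv_sub_le (Set.mem_univ x) (Set.mem_univ y) hg.hasFDerivAt

theorem ConvexOn.inner_gradient_sub_nonneg (hf : ConvexOn ℝ Set.univ f)
    (hx : HasGradientAt f gx x) (hy : HasGradientAt f gy y) : 0 ≤ ⟪gx - gy, x - y⟫ := by
  have hxy := hf.add_inner_gradient_sub_le (y := y) hx
  have hyx := hf.add_inner_gradient_sub_le (y := x) hy
  rw [← neg_sub x y, inner_neg_right] at hxy
  rw [inner_sub_left]
  linarith

end Gradient

theorem norm_sq_eq_norm_sub_sq_add_inner {F : Type*} [NormedAddCommGroup F]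
    [InnerProductSpace ℝ F] (a b : F) : ‖a‖ ^ 2 = ‖a - b‖ ^ 2 + ⟪a - b, b⟫ + ⟪a, b⟫ := by
  rw [← real_inner_self_eq_norm_sq, ← real_inner_self_eq_norm_sq, ← inner_add_right,
    sub_add_cancel, inner_sub_left, real_inner_comm b a]
  ring

theorem adgd_step_decrease_general {d : ℕ}
    (f : EuclideanSpace ℝ (Fin d) → ℝ) (f' : EuclideanSpace ℝ (Fin d) → EuclideanSpace ℝ (Fin d))
    (hconv : ConvexOn ℝ Set.univ f)
    (hgrad : ∀ z, HasGradientAt f (f' z) z)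
    (γ : ℝ)
    (αp αk : ℝ) (hαp : 0 < αp) (hαk : 0 < αk)
    (xp xk x1 : EuclideanSpace ℝ (Fin d))
    (hxk : xk = xp - αp • f' xp)
    (hx1 : x1 = xk - αk • f' xk)
    (hstep : αk * ‖f' xk - f' xp‖ ≤ γ * ‖xk - xp‖) :
    ‖x1 - xk‖ ^ 2 ≤ γ ^ 2 * ‖xk - xp‖ ^ 2 + αk * (αk / αp) * (f xp - f xk) := by
  set a := f' xk
  set b := f' xp
  have hxkxp : xk - xp = -(αp • b) := by rw [hxk]; abel
  have hmono : ⟪a - b, b⟫ ≤ 0 := by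
    have := hconv.inner_gradient_sub_nonneg (hgrad xk) (hgrad xp)
    rw [hxkxp, inner_neg_right, real_inner_smul_right] at this
    exact nonpos_of_mul_nonpos_right (neg_nonneg.mp this) hαp
  have hdescent : ⟪a, b⟫ ≤ (f xp - f xk) / αp := by
    have := hconv.add_inner_gradient_sub_le (y := xp) (hgrad xk)
    rw [← neg_sub, hxkxp, neg_neg, real_inner_smul_right] at this
    rw [le_div_iff₀ hαp]
    linarith
  have hstep_sq : αk ^ 2 * ‖a - b‖ ^ 2 ≤ γ ^ 2 * ‖xk - xp‖ ^ 2 := by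
    simpa only [mul_pow] using pow_le_pow_left₀ (by positivity) hstep 2
  have hx1xk : ‖x1 - xk‖ = αk * ‖a‖ := by
    rw [hx1, sub_sub_cancel_left, norm_neg, norm_smul, Real.norm_of_nonneg hαk.le]
  calc ‖x1 - xk‖ ^ 2 = αk ^ 2 * ‖a - b‖ ^ 2 + αk ^ 2 * ⟪a - b, b⟫ + αk ^ 2 * ⟪a, b⟫ := by
        rw [hx1xk, mul_pow, norm_sq_eq_norm_sub_sq_add_inner a b]; ring
    _ ≤ γ ^ 2 * ‖xk - xp‖ ^ 2 + 0 + αk ^ 2 * ((f xp - f xk) / αp) := by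
        gcongr
        exact mul_nonpos_of_nonneg_of_nonpos (sq_nonneg αk) hmono
    _ = γ ^ 2 * ‖xk - xp‖ ^ 2 + αk * (αk / αp) * (f xp - f xk) := by ring

theorem adgd_step_decrease {d : ℕ}
    (f : EuclideanSpace ℝ (Fin d) → ℝ) (f' : EuclideanSpace ℝ (Fin d) → EuclideanSpace ℝ (Fin d))
    (hconv : ConvexOn ℝ Set.univ f)
    (hgrad : ∀ z, HasGradientAt f (f' z) z)
    (γ : ℝ) (hγ : γ ∈ Set.Ioo (0 : ℝ) 1)
    (αp αk : ℝ) (hαp : 0 < αp) (hαk : 0 < αk)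
    (xp xk x1 : EuclideanSpace ℝ (Fin d))
    (hxk : xk = xp - αp • f' xp)
    (hx1 : x1 = xk - αk • f' xk)
    (hstep : αk * ‖f' xk - f' xp‖ ≤ γ * ‖xk - xp‖) :
    ‖x1 - xk‖ ^ 2 ≤ γ ^ 2 * ‖xk - xp‖ ^ 2 + αk * (αk / αp) * (f xp - f xk) :=
  adgd_step_decrease_general f f' hconv hgrad γ αp αk hαp hαk xp xk x1 hxk hx1 hstep
end

section
/- Let f be convex differentiable on R^d and (x^k) be generated by adaptive gradient descent-2 with stepsize rule α_k = min{√(2/3 + θ_{k-1})α_{k-1}, α_{k-1}/√(max(2α_{k-1}²L_k² - 1, 0))}. Then min_{1 ≤ i ≤ k}(f(x^i) - f*) ≤ R²/(2 Σ_{i=1}^k α_i) where R² = ‖x^0 - x*‖² + 2α_0²‖∇f(x^0)‖² + α_0(f(x^0) - f*). -/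
/-!
Along the iterates, `‖x_k - x*‖² + 2α_k²‖∇f(x_k)‖² + 3α_kθ_k (f(x_k) - f*)` is a Lyapunov function.
The gradient inequality at `x_k` and at `x_{k+1}`, together with the second stepsize bound
(which controls `‖∇f(x_{k+1}) - ∇f(x_k)‖ = L_{k+1} α_k ‖∇f(x_k)‖`), show that one step decreases
it by at least `(2α_k + 3α_kθ_k - 3α_{k+1}θ_{k+1}) (f(x_k) - f*)`, a nonnegative weight by the
first stepsize bound. Telescoping, bounding every gap `f(x_i) - f*` below by the smallest one
over `1 ≤ i ≤ k`, and bounding the final Lyapunov value below by `2α_k (f(x_k) - f*)`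
(Cauchy–Schwarz), the weights add up to at least `2 ∑ α_i`.
-/

open scoped RealInnerProductSpace

/-- Stepsize rule of adaptive gradient descent-2:
`α_k = min{√(2/3+θ_{k-1})·α_{k-1}, α_{k-1}/√([2α_{k-1}²L_k²-1]_+)}`,
with the convention `a/0 = +∞` (when the bracket is nonpositive
the second bound is inactive). -/
noncomputable def adgd2Step (αp θp Lk : ℝ) : ℝ :=
  if 2 * αp ^ 2 * Lk ^ 2 - 1 ≤ 0 then Real.sqrt (2 / 3 + θp) * αp
  else min (Real.sqrt (2 / 3 + θp) * αp) (αp / Real.sqrt (2 * αp ^ 2 * Lk ^ 2 - 1))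

section Stepsize

variable {αp θp L : ℝ}

theorem adgd2Step_pos (hα : 0 < αp) (hθ : 0 ≤ θp) : 0 < adgd2Step αp θp L := by
  have hsqrt : 0 < Real.sqrt (2 / 3 + θp) := Real.sqrt_pos.2 (by linarith)
  unfold adgd2Step
  split_ifs with h
  · positivity
  · exact lt_min (by positivity) (div_pos hα (Real.sqrt_pos.2 (by linarith)))

theorem adgd2Step_sq_le (hα : 0 < αp) (hθ : 0 ≤ θp) :
    adgd2Step αp θp L ^ 2 ≤ (2 / 3 + θp) * αp ^ 2 := by
  have hle : adgd2Step αp θp L ≤ Real.sqrt (2 / 3 + θp) * αp := by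
    unfold adgd2Step
    split_ifs
    exacts [le_rfl, min_le_left _ _]
  calc adgd2Step αp θp L ^ 2 ≤ (Real.sqrt (2 / 3 + θp) * αp) ^ 2 := by
        gcongr; exact (adgd2Step_pos hα hθ).le
    _ = (2 / 3 + θp) * αp ^ 2 := by rw [mul_pow, Real.sq_sqrt (by linarith)]

theorem adgd2Step_sq_mul_le (hα : 0 < αp) (hθ : 0 ≤ θp) :
    adgd2Step αp θp L ^ 2 * (2 * αp ^ 2 * L ^ 2 - 1) ≤ αp ^ 2 := by
  by_cases h : 2 * αp ^ 2 * L ^ 2 - 1 ≤ 0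
  · nlinarith [mul_nonpos_of_nonneg_of_nonpos (sq_nonneg (adgd2Step αp θp L)) h]
  · push Not at h
    have hle : adgd2Step αp θp L ≤ αp / Real.sqrt (2 * αp ^ 2 * L ^ 2 - 1) := by
      unfold adgd2Step
      rw [if_neg h.not_ge]
      exact min_le_right _ _
    have hsq : adgd2Step αp θp L ^ 2 ≤ αp ^ 2 / (2 * αp ^ 2 * L ^ 2 - 1) := by
      calc adgd2Step αp θp L ^ 2 ≤ (αp / Real.sqrt (2 * αp ^ 2 * L ^ 2 - 1)) ^ 2 := by
            gcongr; exact (adgd2Step_pos hα hθ).le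
        _ = αp ^ 2 / (2 * αp ^ 2 * L ^ 2 - 1) := by rw [div_pow, Real.sq_sqrt h.le]
    exact (le_div_iff₀ h).1 hsq

theorem adgd2_pos {α θ L : ℕ → ℝ} (hα0 : 0 < α 0) (hθ0 : 0 ≤ θ 0)
    (hα : ∀ k, α (k + 1) = adgd2Step (α k) (θ k) (L (k + 1)))
    (hθ : ∀ k, θ (k + 1) = α (k + 1) / α k) (k : ℕ) : 0 < α k ∧ 0 ≤ θ k := by
  induction k with
  | zero => exact ⟨hα0, hθ0⟩
  | succ k ih =>
    have hpos : 0 < α (k + 1) := hα k ▸ adgd2Step_pos ih.1 ih.2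
    exact ⟨hpos, hθ k ▸ (div_pos hpos ih.1).le⟩

end Stepsize

section Lyapunov

variable {E : Type*} [NormedAddCommGroup E] [InnerProductSpace ℝ E] [CompleteSpace E]
  {f : E → ℝ} {f' : E → E}

theorem ConvexOn.add_inner_le_of_hasGradientAt (hconv : ConvexOn ℝ Set.univ f) {g u : E}
    (hf : HasGradientAt f g u) (v : E) : f u + ⟪g, v - u⟫ ≤ f v := by
  have hline : ConvexOn ℝ Set.univ (f ∘ AffineMap.lineMap (k := ℝ) u v) := by
    simpa using hconv.comp_affineMap (AffineMap.lineMap u v)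
  have hderiv : HasDerivAt (f ∘ AffineMap.lineMap (k := ℝ) u v) ⟪g, v - u⟫ 0 := by
    have hf' := hf.hasFDerivAt
    rw [← AffineMap.lineMap_apply_zero u v (k := ℝ)] at hf'
    simpa using hf'.comp_hasDerivAt (0 : ℝ) AffineMap.hasDerivAt_lineMap
  have := hline.le_slope_of_hasDerivAt (Set.mem_univ 0) (Set.mem_univ 1) one_pos hderiv
  simp [slope_def_field] at this
  linarith

theorem norm_sub_smul_sub_sq_le (hconv : ConvexOn ℝ Set.univ f) {g u : E}
    (hf : HasGradientAt f g u) {a : ℝ} (ha : 0 ≤ a) (z : E) :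
    ‖u - a • g - z‖ ^ 2 ≤ ‖u - z‖ ^ 2 - 2 * a * (f u - f z) + a ^ 2 * ‖g‖ ^ 2 := by
  have hgap : f u - f z ≤ ⟪g, u - z⟫ := by
    have := hconv.add_inner_le_of_hasGradientAt hf z
    rw [← neg_sub u z, inner_neg_right] at this
    linarith
  have hexpand : ‖u - a • g - z‖ ^ 2 = ‖u - z‖ ^ 2 - 2 * a * ⟪g, u - z⟫ + a ^ 2 * ‖g‖ ^ 2 := by
    rw [sub_right_comm, norm_sub_sq_real, real_inner_smul_right, norm_smul, mul_pow,
      Real.norm_eq_abs, sq_abs, real_inner_comm]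
    ring
  nlinarith

theorem two_mul_sub_le_norm_sq_add (hconv : ConvexOn ℝ Set.univ f) {g u : E}
    (hf : HasGradientAt f g u) {a : ℝ} (ha : 0 ≤ a) (z : E) :
    2 * a * (f u - f z) ≤ ‖u - z‖ ^ 2 + a ^ 2 * ‖g‖ ^ 2 := by
  have := norm_sub_smul_sub_sq_le hconv hf ha z
  nlinarith [sq_nonneg ‖u - a • g - z‖]

-- Also true for `v = u`, where `x / 0 = 0` makes both sides vanish.
omit [InnerProductSpace ℝ E] [CompleteSpace E] in
theorem norm_apply_sub_apply_eq_div_mul {F : Type*} [NormedAddCommGroup F] (φ : E → F)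
    (u v : E) : ‖φ v - φ u‖ = ‖φ v - φ u‖ / ‖v - u‖ * ‖v - u‖ := by
  rcases eq_or_ne v u with rfl | h
  · simp
  · rw [div_mul_cancel₀ _ (norm_ne_zero_iff.2 (sub_ne_zero.2 h))]

theorem adgd2_lyapunov_step (hconv : ConvexOn ℝ Set.univ f)
    (hgrad : ∀ z, HasGradientAt f (f' z) z) {u v : E} {a b t L : ℝ}
    (hv : v = u - a • f' u) (ha : 0 ≤ a) (ht : 0 ≤ t) (htab : t * a = b ^ 2)
    (hL : ‖f' v - f' u‖ = L * ‖v - u‖) (hb : b ^ 2 * (2 * a ^ 2 * L ^ 2 - 1) ≤ a ^ 2) (z : E) :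
    ‖v - z‖ ^ 2 + 2 * b ^ 2 * ‖f' v‖ ^ 2 + 3 * t * (f v - f z) + (2 * a - 3 * t) * (f u - f z)
      ≤ ‖u - z‖ ^ 2 + 2 * a ^ 2 * ‖f' u‖ ^ 2 := by
  have hdist : ‖v - z‖ ^ 2 ≤ ‖u - z‖ ^ 2 - 2 * a * (f u - f z) + a ^ 2 * ‖f' u‖ ^ 2 :=
    hv ▸ norm_sub_smul_sub_sq_le hconv (hgrad u) ha z
  have huv : u - v = a • f' u := by rw [hv, sub_sub_cancel]
  have hvu : v - u = -(a • f' u) := by rw [← huv, neg_sub]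
  have hinner : a * ⟪f' v, f' u⟫ ≤ f u - f v := by
    have := hconv.add_inner_le_of_hasGradientAt (hgrad v) u
    rw [huv, real_inner_smul_right] at this
    linarith
  have hdecrease : f u - f v ≤ a * ‖f' u‖ ^ 2 := by
    have := hconv.add_inner_le_of_hasGradientAt (hgrad u) v
    rw [hvu, inner_neg_right, real_inner_smul_right, real_inner_self_eq_norm_sq] at this
    linarith
  have hgradgap : 2 * b ^ 2 * ‖f' v - f' u‖ ^ 2 ≤ (a ^ 2 + b ^ 2) * ‖f' u‖ ^ 2 := by
    rw [hL, hvu, norm_neg, norm_smul, Real.norm_of_nonneg ha]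
    nlinarith [mul_le_mul_of_nonneg_right hb (sq_nonneg ‖f' u‖)]
  have hgradnorm : 2 * b ^ 2 * ‖f' v‖ ^ 2 ≤ a ^ 2 * ‖f' u‖ ^ 2 + 3 * t * (f u - f v) := by
    have hpolar := norm_sub_sq_real (f' v) (f' u)
    nlinarith [mul_le_mul_of_nonneg_left hinner ht, mul_le_mul_of_nonneg_left hdecrease ht]
  linarith

end Lyapunov

theorem exists_mul_sum_le_of_lyapunov {Δ α V Φ : ℕ → ℝ}
    (hstep : ∀ k, Φ (k + 1) + V (k + 1) * Δ (k + 1) + (2 * α k - V (k + 1)) * Δ k ≤ Φ k)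
    (hV : ∀ k, V (k + 1) ≤ 2 * α k + V k) (hV0 : ∀ k, 0 ≤ V k) (hΔ : ∀ k, 0 ≤ Δ k)
    (hα : ∀ k, 0 ≤ α k) (hΦ : ∀ k, 2 * α k * Δ k ≤ Φ k) {K : ℕ} (hK : 1 ≤ K) :
    ∃ i ∈ Finset.Icc 1 K, Δ i * (2 * ∑ j ∈ Finset.Icc 1 K, α j) ≤ Φ 0 + V 0 * Δ 0 := by
  obtain ⟨i, hi, hmin⟩ := Finset.exists_min_image (Finset.Icc 1 K) Δ ⟨1, by simp [hK]⟩
  have hinvariant : ∀ k, 1 ≤ k → k ≤ K →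
      Δ i * (2 * ∑ j ∈ Finset.Ico 1 k, α j + V 1 - V k) + Φ k + V k * Δ k ≤ Φ 0 + V 0 * Δ 0 := by
    intro k hk
    induction k, hk using Nat.le_induction with
    | base =>
      intro _
      simp only [Finset.Ico_self, Finset.sum_empty]
      nlinarith [hstep 0, mul_nonneg (by linarith [hV 0] : 0 ≤ 2 * α 0 + V 0 - V 1) (hΔ 0)]
    | succ k hk ih =>
      intro hkK
      have hΔk := hmin k (Finset.mem_Icc.2 ⟨hk, by omega⟩)
      rw [Finset.sum_Ico_succ_top hk]
      nlinarith [ih (by omega), hstep k, mul_le_mul_of_nonneg_left hΔk (by linarith [hV k] :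
        0 ≤ 2 * α k + V k - V (k + 1))]
  refine ⟨i, hi, ?_⟩
  have hΔK := hmin K (Finset.mem_Icc.2 ⟨hK, le_rfl⟩)
  rw [← Finset.Ico_add_one_right_eq_Icc, Finset.sum_Ico_succ_top hK]
  nlinarith [hinvariant K hK le_rfl, hΦ K, mul_le_mul_of_nonneg_left hΔK (hα K),
    mul_le_mul_of_nonneg_left hΔK (hV0 K), mul_nonneg (hΔ i) (hV0 1)]

theorem adgd2_rate_general {d : ℕ}
    (f : EuclideanSpace ℝ (Fin d) → ℝ) (f' : EuclideanSpace ℝ (Fin d) → EuclideanSpace ℝ (Fin d))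
    (hconv : ConvexOn ℝ Set.univ f)
    (hgrad : ∀ z, HasGradientAt f (f' z) z)
    (x : ℕ → EuclideanSpace ℝ (Fin d)) (α θ L : ℕ → ℝ)
    (xstar : EuclideanSpace ℝ (Fin d)) (hmin : ∀ y, f xstar ≤ f y)
    (hα0 : 0 < α 0) (hθ0 : θ 0 = 1 / 3)
    (hL : ∀ k ≥ 1, L k = ‖f' (x k) - f' (x (k - 1))‖ / ‖x k - x (k - 1)‖)
    (hα : ∀ k ≥ 1, α k = adgd2Step (α (k - 1)) (θ (k - 1)) (L k))
    (hθ : ∀ k ≥ 1, θ k = α k / α (k - 1))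
    (hx : ∀ k, x (k + 1) = x k - α k • f' (x k)) :
    ∀ k ≥ 1, ∃ i ∈ Finset.Icc 1 k,
      f (x i) - f xstar ≤
        (‖x 0 - xstar‖ ^ 2 + 2 * (α 0) ^ 2 * ‖f' (x 0)‖ ^ 2 + α 0 * (f (x 0) - f xstar)) /
          (2 * ∑ i ∈ Finset.Icc 1 k, α i) := by
  have hα' (k : ℕ) : α (k + 1) = adgd2Step (α k) (θ k) (L (k + 1)) := hα (k + 1) k.succ_pos
  have hθ' (k : ℕ) : θ (k + 1) = α (k + 1) / α k := hθ (k + 1) k.succ_pos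
  have hpos := adgd2_pos hα0 (by rw [hθ0]; norm_num) hα' hθ'
  have hsq (k : ℕ) : α (k + 1) * θ (k + 1) * α k = α (k + 1) ^ 2 := by
    rw [hθ', mul_assoc, div_mul_cancel₀ _ (hpos k).1.ne', sq]
  intro K hK
  obtain ⟨i, hi, hbound⟩ := exists_mul_sum_le_of_lyapunov (Δ := fun k => f (x k) - f xstar)
    (V := fun k => 3 * (α k * θ k)) (Φ := fun k => ‖x k - xstar‖ ^ 2 + 2 * α k ^ 2 * ‖f' (x k)‖ ^ 2)
    (fun k => adgd2_lyapunov_step hconv hgrad (hx k) (hpos k).1.le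
      (mul_nonneg (hpos _).1.le (hpos _).2) (hsq k)
      (by rw [hL (k + 1) k.succ_pos]; exact norm_apply_sub_apply_eq_div_mul f' _ _)
      (hα' k ▸ adgd2Step_sq_mul_le (hpos k).1 (hpos k).2) xstar)
    (fun k => by
      have := hα' k ▸ adgd2Step_sq_le (L := L (k + 1)) (hpos k).1 (hpos k).2
      nlinarith [hsq k, (hpos k).1])
    (fun k => mul_nonneg zero_le_three (mul_nonneg (hpos k).1.le (hpos k).2))
    (fun k => sub_nonneg.2 (hmin _)) (fun k => (hpos k).1.le)
    (fun k => by
      have := two_mul_sub_le_norm_sq_add hconv (hgrad (x k)) (hpos k).1.le xstar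
      nlinarith [sq_nonneg (α k * ‖f' (x k)‖)])
    hK
  refine ⟨i, hi, (le_div_iff₀ ?_).2 ?_⟩
  · exact mul_pos two_pos (Finset.sum_pos (fun j _ => (hpos j).1) ⟨1, by simp [hK]⟩)
  · rw [hθ0] at hbound
    linarith

theorem adgd2_rate {d : ℕ}
    (f : EuclideanSpace ℝ (Fin d) → ℝ) (f' : EuclideanSpace ℝ (Fin d) → EuclideanSpace ℝ (Fin d))
    (hconv : ConvexOn ℝ Set.univ f)
    (hgrad : ∀ z, HasGradientAt f (f' z) z)
    (hloclip : LocallyLipschitz f')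
    (x : ℕ → EuclideanSpace ℝ (Fin d)) (α θ L : ℕ → ℝ)
    (xstar : EuclideanSpace ℝ (Fin d)) (hmin : ∀ y, f xstar ≤ f y)
    (hα0 : 0 < α 0) (hθ0 : θ 0 = 1 / 3)
    (hL : ∀ k ≥ 1, L k = ‖f' (x k) - f' (x (k - 1))‖ / ‖x k - x (k - 1)‖)
    (hα : ∀ k ≥ 1, α k = adgd2Step (α (k - 1)) (θ (k - 1)) (L k))
    (hθ : ∀ k ≥ 1, θ k = α k / α (k - 1))
    (hx : ∀ k, x (k + 1) = x k - α k • f' (x k)) :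
    ∀ k ≥ 1, ∃ i ∈ Finset.Icc 1 k,
      f (x i) - f xstar ≤
        (‖x 0 - xstar‖ ^ 2 + 2 * (α 0) ^ 2 * ‖f' (x 0)‖ ^ 2 + α 0 * (f (x 0) - f xstar)) /
          (2 * ∑ i ∈ Finset.Icc 1 k, α i) :=
  adgd2_rate_general f f' hconv hgrad x α θ L xstar hmin hα0 hθ0 hL hα hθ hx
end

section
/- Let g be convex lsc and f convex differentiable, and let x^{k+1} = prox_{α_k g}(x^k - α_k ∇f(x^k)) with implicit subgradients u^k ∈ ∂g(x^k), u^{k+1} ∈ ∂g(x^{k+1}). Then for any minimizer x* of F = f + g: ‖x^{k+1} - x*‖² + 2α_k(F(x^k) - F(x*)) ≤ ‖x^k - x*‖² + α_k² ‖∇f(x^k) + u^k‖². -/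
/-!
Convexity of `f` (through its gradient at `x^k`) and the subgradient inequalities for `g` at
`x^k` and `x^{k+1}` bound the gap `F(x^k) - F(x*)` by `⟪x^k - x*, G⟫ + α ⟪G, u^k - u^{k+1}⟫`,
where `G = ∇f(x^k) + u^{k+1}` is the actual step direction. Expanding `‖x^k - x* - α G‖²` and
completing the square `‖G‖² + 2 ⟪G, w⟫ ≤ ‖G + w‖²` with `w = u^k - u^{k+1}` gives the inequality.
-/

open scoped RealInnerProductSpace

theorem ConvexOn.add_le_of_hasFDerivAt {E : Type*} [NormedAddCommGroup E] [NormedSpace ℝ E]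
    {s : Set E} {f : E → ℝ} {f' : E →L[ℝ] ℝ} {x y : E} (hf : ConvexOn ℝ s f)
    (hx : x ∈ s) (hy : y ∈ s) (hfx : HasFDerivAt f f' x) :
    f x + f' (y - x) ≤ f y := by
  set ℓ : ℝ →ᵃ[ℝ] E := AffineMap.lineMap x y
  have hderiv : HasDerivAt (f ∘ ℓ) (f' (y - x)) 0 :=
    (by simpa [ℓ] using hfx : HasFDerivAt f f' (ℓ 0)).comp_hasDerivAt 0
      AffineMap.hasDerivAt_lineMap
  have hslope := (hf.comp_affineMap ℓ).le_slope_of_hasDerivAt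
    (by simpa [ℓ] using hx) (by simpa [ℓ] using hy) one_pos hderiv
  simp only [slope_def_field, Function.comp_apply, ℓ, AffineMap.lineMap_apply_zero,
    AffineMap.lineMap_apply_one, sub_zero, div_one] at hslope
  linarith

section InnerProductSpace

variable {E : Type*} [NormedAddCommGroup E] [InnerProductSpace ℝ E]

theorem ConvexOn.add_inner_le_of_hasGradientAt_s19 [CompleteSpace E] {s : Set E} {f : E → ℝ}
    {f' x y : E} (hf : ConvexOn ℝ s f) (hx : x ∈ s) (hy : y ∈ s) (hfx : HasGradientAt f f' x) :
    f x + ⟪f', y - x⟫ ≤ f y := by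
  simpa using hf.add_le_of_hasFDerivAt hx hy hfx.hasFDerivAt

theorem sub_le_inner_of_forward_backward_step {f g : E → ℝ} {v u u₁ x x₁ z : E} {α : ℝ}
    (hf : f x + ⟪v, z - x⟫ ≤ f z) (hu : g x + ⟪u, x₁ - x⟫ ≤ g x₁)
    (hu₁ : g x₁ + ⟪u₁, z - x₁⟫ ≤ g z) (hx₁ : x₁ = x - α • (v + u₁)) :
    f x + g x - (f z + g z) ≤ ⟪x - z, v + u₁⟫ + α * ⟪v + u₁, u - u₁⟫ := by
  subst hx₁
  have hinner : ⟪v, z - x⟫ + ⟪u₁, z - (x - α • (v + u₁))⟫ + ⟪u, x - α • (v + u₁) - x⟫ =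
      -(⟪x - z, v + u₁⟫ + α * ⟪v + u₁, u - u₁⟫) := by
    simp only [inner_sub_left, inner_sub_right, inner_add_left, inner_add_right,
      real_inner_smul_right, real_inner_comm]
    ring
  linarith

theorem norm_sub_smul_sq_add_le {p v w : E} {α Δ : ℝ} (hα : 0 ≤ α)
    (hΔ : Δ ≤ ⟪p, v⟫ + α * ⟪v, w⟫) :
    ‖p - α • v‖ ^ 2 + 2 * α * Δ ≤ ‖p‖ ^ 2 + α ^ 2 * ‖v + w‖ ^ 2 := by
  rw [norm_sub_sq_real, norm_add_sq_real, real_inner_smul_right, norm_smul,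
    Real.norm_of_nonneg hα]
  nlinarith [mul_le_mul_of_nonneg_left hΔ hα, mul_nonneg (sq_nonneg α) (sq_nonneg ‖w‖)]

end InnerProductSpace

theorem prox_grad_basic_inequality_general {d : ℕ}
    (f g : EuclideanSpace ℝ (Fin d) → ℝ)
    (f' : EuclideanSpace ℝ (Fin d) → EuclideanSpace ℝ (Fin d))
    (hfconv : ConvexOn ℝ Set.univ f)
    (hgrad : ∀ z, HasGradientAt f (f' z) z)
    (αk : ℝ) (hαk : 0 < αk)
    (xk x1 u u1 xstar : EuclideanSpace ℝ (Fin d))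
    -- u = u^k ∈ ∂g(x^k), u1 = u^{k+1} ∈ ∂g(x^{k+1})
    (hu : ∀ y, g xk + ⟪u, y - xk⟫ ≤ g y)
    (hu1 : ∀ y, g x1 + ⟪u1, y - x1⟫ ≤ g y)
    -- x^{k+1} = prox_{α_k g}(x^k - α_k ∇f(x^k)), implicitly:
    (hx1 : x1 = xk - αk • (f' xk + u1)) :
    ‖x1 - xstar‖ ^ 2 + 2 * αk * ((f xk + g xk) - (f xstar + g xstar)) ≤
      ‖xk - xstar‖ ^ 2 + αk ^ 2 * ‖f' xk + u‖ ^ 2 := by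
  have hgap := sub_le_inner_of_forward_backward_step
    (hfconv.add_inner_le_of_hasGradientAt_s19 (Set.mem_univ xk) (Set.mem_univ xstar) (hgrad xk))
    (hu x1) (hu1 xstar) hx1
  have hstep : x1 - xstar = (xk - xstar) - αk • (f' xk + u1) := by rw [hx1]; abel
  have hdir : f' xk + u = (f' xk + u1) + (u - u1) := by abel
  rw [hstep, hdir]
  exact norm_sub_smul_sq_add_le hαk.le hgap

theorem prox_grad_basic_inequality {d : ℕ}
    (f g : EuclideanSpace ℝ (Fin d) → ℝ)
    (f' : EuclideanSpace ℝ (Fin d) → EuclideanSpace ℝ (Fin d))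
    (hfconv : ConvexOn ℝ Set.univ f)
    (hgconv : ConvexOn ℝ Set.univ g)
    (hglsc : LowerSemicontinuous g)
    (hgrad : ∀ z, HasGradientAt f (f' z) z)
    (αk : ℝ) (hαk : 0 < αk)
    (xk x1 u u1 xstar : EuclideanSpace ℝ (Fin d))
    -- u = u^k ∈ ∂g(x^k), u1 = u^{k+1} ∈ ∂g(x^{k+1})
    (hu : ∀ y, g xk + ⟪u, y - xk⟫ ≤ g y)
    (hu1 : ∀ y, g x1 + ⟪u1, y - x1⟫ ≤ g y)
    -- x^{k+1} = prox_{α_k g}(x^k - α_k ∇f(x^k)), implicitly: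
    (hx1 : x1 = xk - αk • (f' xk + u1))
    -- x* minimizes F = f + g
    (hmin : ∀ y, f xstar + g xstar ≤ f y + g y) :
    ‖x1 - xstar‖ ^ 2 + 2 * αk * ((f xk + g xk) - (f xstar + g xstar)) ≤
      ‖xk - xstar‖ ^ 2 + αk ^ 2 * ‖f' xk + u‖ ^ 2 :=
  prox_grad_basic_inequality_general f g f' hfconv hgrad αk hαk xk x1 u u1 xstar hu hu1 hx1
end
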